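/- Let K be a number field, S a finite set of places containing all archimedean places and at least one nonarchimedean place ν ∈ S, and let A ≤ O_S be a finite-index additive subgroup of the ring of S-integers. Then A is dense in the completion K_ν. -/

import Mathlib

/-!
Write `x = a / b` with `a, b ∈ R` and factor `(b) = vᵏ J` with `v ∤ J`. Splitting `1 = f + e` with
`f ∈ vᵏ`, `e ∈ J` gives `x = e x + f x`, where `e x` is integral away from `v` because `e vᵏ ⊆ (b)`,
and `f x` is integral at `v` because `f J ⊆ (b)`. Hence `K` is the sum of the `S`-integers and the
`v`-integral elements; as `R` is `v`-adically dense in the latter, the `S`-integers are dense in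
`K_v`. A subgroup of finite index `n` contains `n • O_S`, which is still dense since multiplication
by `n` is a homeomorphism of `K_v` in characteristic zero.
-/

open IsDedekindDomain

theorem Valued.mem_closure_of_forall_exists_lt {R Γ₀ : Type*} [Ring R]
    [LinearOrderedCommGroupWithZero Γ₀] [Valued R Γ₀] {s : Set R} {x : R}
    (h : ∀ γ : Γ₀ˣ, ∃ y ∈ s, Valued.v (y - x) < γ) : x ∈ closure s := by
  refine mem_closure_iff_nhds.mpr fun U hU => ?_
  obtain ⟨γ, hγ⟩ := Valued.mem_nhds.mp hU
  obtain ⟨y, hys, hyx⟩ := h (Units.map (MonoidWithZeroHom.ValueGroup₀.embedding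
    (f := .ofClass (Valued.v : Valuation R Γ₀))) γ)
  exact ⟨y, hγ ((Valuation.restrict_lt_iff_lt_embedding _).mpr hyx), hys⟩

namespace IsDedekindDomain.HeightOneSpectrum

variable {R : Type*} [CommRing R] [IsDedekindDomain R] {K : Type*} [Field K] [Algebra R K]
  [IsFractionRing R K]

theorem valuation_div_le_one_of_mul_mem_span (w : HeightOneSpectrum R) {r t b : R}
    (h : r * t ∈ Ideal.span {b}) (ht : t ∉ w.asIdeal) :
    w.valuation K (algebraMap R K r / algebraMap R K b) ≤ 1 := by
  obtain ⟨q, hq⟩ := Ideal.mem_span_singleton'.mp h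
  rcases eq_or_ne b 0 with rfl | hb
  · simp
  have hb' : algebraMap R K b ≠ 0 := (map_ne_zero_iff _ (IsFractionRing.injective R K)).mpr hb
  have hrtb : algebraMap R K r / algebraMap R K b * algebraMap R K t = algebraMap R K q := by
    rw [div_mul_eq_mul_div, ← map_mul, ← hq, map_mul, mul_div_cancel_right₀ _ hb']
  calc w.valuation K (algebraMap R K r / algebraMap R K b)
      = w.valuation K (algebraMap R K q) := by
        rw [← hrtb, map_mul, (w.valuation_eq_one_iff_notMem).mpr ht, mul_one]
    _ ≤ 1 := w.valuation_le_one q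

theorem exists_mem_pow_notMem {v w : HeightOneSpectrum R} (hvw : v ≠ w) (k : ℕ) :
    ∃ t ∈ v.asIdeal ^ k, t ∉ w.asIdeal := by
  by_contra! h
  exact hvw (HeightOneSpectrum.ext (v.isMaximal.eq_of_le w.isPrime.ne_top
    (w.isPrime.le_of_pow_le h)))

theorem exists_mem_integer_valuation_sub_le_one {S : Set (HeightOneSpectrum R)}
    {v : HeightOneSpectrum R} (hv : v ∈ S) (x : K) :
    ∃ y ∈ S.integer K, v.valuation K (x - y) ≤ 1 := by
  obtain ⟨a, b, hb, rfl⟩ := IsFractionRing.div_surjective (A := R) x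
  have hspan : Ideal.span {b} ≠ 0 := by
    simpa [Ideal.zero_eq_bot, Ideal.span_singleton_eq_bot] using nonZeroDivisors.ne_zero hb
  obtain ⟨k, J, hvJ, hbJ⟩ := WfDvdMonoid.max_power_factor hspan v.irreducible
  have hJv : ¬ J ≤ v.asIdeal := by rwa [← Ideal.dvd_iff_le]
  have hcop : v.asIdeal ^ k ⊔ J = ⊤ :=
    Ideal.pow_sup_eq_top (codisjoint_iff.mp (v.isMaximal.out.not_le_iff_codisjoint.mp hJv))
  obtain ⟨f, hf, e, he, hfe⟩ := Submodule.mem_sup.mp (hcop ▸ Submodule.mem_top : (1 : R) ∈ _)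
  refine ⟨algebraMap R K e / algebraMap R K b * algebraMap R K a, fun w hw => ?_, ?_⟩
  · obtain ⟨t, htv, htw⟩ := exists_mem_pow_notMem (fun h : v = w => hw (h ▸ hv)) k
    have het : e * t ∈ Ideal.span {b} := hbJ ▸ mul_comm t e ▸ Ideal.mul_mem_mul htv he
    rw [map_mul]
    exact mul_le_one' (w.valuation_div_le_one_of_mul_mem_span het htw) (w.valuation_le_one a)
  · obtain ⟨t, htJ, htv⟩ := Set.not_subset.mp hJv
    have hft : f * t ∈ Ideal.span {b} := hbJ ▸ Ideal.mul_mem_mul hf htJ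
    have hx : algebraMap R K a / algebraMap R K b - algebraMap R K e / algebraMap R K b *
        algebraMap R K a = algebraMap R K f / algebraMap R K b * algebraMap R K a := by
      rw [eq_sub_of_add_eq hfe, map_sub, map_one]
      ring
    rw [hx, map_mul]
    exact mul_le_one' (v.valuation_div_le_one_of_mul_mem_span hft htv) (v.valuation_le_one a)

theorem exists_mem_integer_valuation_sub_lt {S : Set (HeightOneSpectrum R)}
    {v : HeightOneSpectrum R} (hv : v ∈ S) (x : K) (γ : (WithZero (Multiplicative ℤ))ˣ) :
    ∃ y ∈ S.integer K, v.valuation K (y - x) < γ := by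
  obtain ⟨z, hz, hxz⟩ := exists_mem_integer_valuation_sub_le_one hv x
  obtain ⟨a, ha⟩ := v.exists_valuation_sub_lt_of_integer hxz γ
  refine ⟨algebraMap R K a + z, add_mem ((S.integer K).algebraMap_mem a) hz, ?_⟩
  rwa [show algebraMap R K a + z - x = algebraMap R K a - (x - z) by ring]

theorem denseRange_integer_adicCompletion {S : Set (HeightOneSpectrum R)}
    {v : HeightOneSpectrum R} (hv : v ∈ S) :
    DenseRange (fun y : S.integer K => algebraMap K (v.adicCompletion K) y) := by
  refine dense_closure.mp ((v.denseRange_algebraMap K).mono ?_)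
  rintro _ ⟨x, rfl⟩
  refine Valued.mem_closure_of_forall_exists_lt fun γ => ?_
  obtain ⟨y, hy, hyx⟩ := exists_mem_integer_valuation_sub_lt hv x γ
  refine ⟨_, ⟨⟨y, hy⟩, rfl⟩, ?_⟩
  rw [← map_sub]
  exact (valuedAdicCompletion_eq_valuation' v (y - x)).trans_lt hyx

end IsDedekindDomain.HeightOneSpectrum

theorem DenseRange.restrict_of_index_ne_zero {M X : Type*} [AddCommGroup M] [AddCommGroup X]
    [Module ℚ X] [TopologicalSpace X] [ContinuousAdd X] {f : M →+ X} (hf : DenseRange f)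
    {A : AddSubgroup M} (hA : A.index ≠ 0) : DenseRange (fun a : A => f a) := by
  have hsurj : Function.Surjective (fun x : X => A.index • x) := fun x =>
    ⟨(A.index : ℚ)⁻¹ • x, by
      dsimp only
      rw [← Nat.cast_smul_eq_nsmul ℚ, smul_smul, mul_inv_cancel₀ (by exact_mod_cast hA), one_smul]⟩
  refine (hsurj.denseRange.comp hf (continuous_id.nsmul _)).mono ?_
  rintro _ ⟨m, rfl⟩
  exact ⟨⟨A.index • m, A.nsmul_index_mem m⟩, map_nsmul f _ _⟩

theorem finite_index_subgroup_dense_in_adicCompletion {K : Type*} [Field K] [NumberField K]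
    (S : Finset (HeightOneSpectrum (NumberField.RingOfIntegers K)))
    (v : HeightOneSpectrum (NumberField.RingOfIntegers K)) (hv : v ∈ S)
    (A : AddSubgroup ((S : Set (HeightOneSpectrum (NumberField.RingOfIntegers K))).integer K))
    (hA : A.index ≠ 0) :
    DenseRange (fun x : A =>
      algebraMap K (v.adicCompletion K) ((x : (S : Set (HeightOneSpectrum (NumberField.RingOfIntegers K))).integer K) : K)) := by
  have : CharZero (v.adicCompletion K) :=
    charZero_of_injective_algebraMap (algebraMap K (v.adicCompletion K)).injective
  exact DenseRange.restrict_of_index_ne_zero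
    (f := (algebraMap K (v.adicCompletion K)).toAddMonoidHom.comp
      ((S : Set (HeightOneSpectrum (NumberField.RingOfIntegers K))).integer K).val.toAddMonoidHom)
    (HeightOneSpectrum.denseRange_integer_adicCompletion (Finset.mem_coe.mpr hv)) hA
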